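/- arXiv:2207.07299 — 2 statements merged into one kernel-verified Lean document; each statement's English description precedes it below -/
import Mathlib

section
/- Under the two-groups model, let 𝓡 = 𝓡(p_1,…,p_m) ⊆ {1,…,m} be any measurable multiple-testing procedure, with V = #{i ∈ 𝓡 : H_i = 0} and R = |𝓡|. Then FDR(𝓡) := E[(V/R)·1{R > 0}] ≤ max-lfdr(𝓡) := E[max_{i∈𝓡} lfdr(p_i)], where the maximum over an empty rejection set is 0. -/
open MeasureTheory ProbabilityTheory Filter

noncomputable section

/-- The uniform distribution on `[0,1]` (the null `p`-value distribution). -/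
def uniform01 : Measure ℝ := volume.restrict (Set.Icc 0 1)

/-- `orderStat m p k` is the `k`-th order statistic `p_(k)` of `p_1, …, p_m` (1-indexed),
with the conventions `p_(0) = 0` and `p_(k) = 0` for `k > m`. -/
def orderStat (m : ℕ) (p : Fin m → ℝ) (k : ℕ) : ℝ :=
  if h : 1 ≤ k ∧ k ≤ m then p (Tuple.sort p ⟨k - 1, by omega⟩) else 0

/-- The SL rejection count at level `q`: the largest minimizer over `k ∈ {0, …, m}`
of `p_(k) - q k / m`. -/
def slCount (m : ℕ) (q : ℝ) (p : Fin m → ℝ) : ℕ :=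
  sSup {k | k ≤ m ∧ ∀ j ≤ m,
    orderStat m p k - q * k / m ≤ orderStat m p j - q * j / m}

/-- The SL rejection threshold `τ_q = p_(R_q)`. -/
def slThreshold (m : ℕ) (q : ℝ) (p : Fin m → ℝ) : ℝ :=
  orderStat m p (slCount m q p)

/-- The empirical cdf `F_m` of `p_1, …, p_m`. -/
def ecdf (m : ℕ) (p : Fin m → ℝ) (t : ℝ) : ℝ :=
  ((Finset.univ.filter fun i => p i ≤ t).card : ℝ) / m

/-- The alternative `p`-value distribution, with density `f1` on `[0,1]`. -/
def altMeasure (f1 : ℝ → ℝ) : Measure ℝ :=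
  uniform01.withDensity fun t => ENNReal.ofReal (f1 t)

/-- The two-groups distribution of a pair `(H_i, p_i)`: `H_i ~ Bernoulli(1 - π0)`
(`false` meaning the null holds), `p_i | H_i = false ~ Unif[0,1]`, and
`p_i | H_i = true` has density `f1`. -/
def pairMeasure (π0 : ℝ) (f1 : ℝ → ℝ) : Measure (Bool × ℝ) :=
  ENNReal.ofReal π0 • (Measure.dirac false).prod uniform01
    + ENNReal.ofReal (1 - π0) • (Measure.dirac true).prod (altMeasure f1)

/-- The joint distribution of the i.i.d. pairs `(H_i, p_i)`, `i = 1, …, m`. -/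
def jointMeasure (m : ℕ) (π0 : ℝ) (f1 : ℝ → ℝ) : Measure (Fin m → Bool × ℝ) :=
  Measure.pi fun _ => pairMeasure π0 f1

/-- The `p`-values of an outcome of the two-groups model. -/
def pvals (m : ℕ) (x : Fin m → Bool × ℝ) (i : Fin m) : ℝ := (x i).2

/-- The marginal `p`-value mixture density `f = π0 + (1 - π0) f1`. -/
def mixDensity (π0 : ℝ) (f1 : ℝ → ℝ) (t : ℝ) : ℝ := π0 + (1 - π0) * f1 t

/-- The local false discovery rate `lfdr(t) = π0 / f(t)`. -/
def lfdr (π0 : ℝ) (f1 : ℝ → ℝ) (t : ℝ) : ℝ := π0 / mixDensity π0 f1 t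

/-- The event that, rejecting the `R` hypotheses with the smallest `p`-values,
the last rejection is a false discovery: `R > 0` and `H_(R) = 0`, where `H_(R)` is the
hypothesis indicator paired with the `R`-th smallest `p`-value. -/
def lastRejNull (m : ℕ) (R : ℕ) (x : Fin m → Bool × ℝ) : Prop :=
  ∃ h : 1 ≤ R ∧ R ≤ m,
    (x (Tuple.sort (pvals m x) ⟨R - 1, by omega⟩)).1 = false

/-- The maximum of `g` over a finite set `S`, with the convention that the
maximum over the empty set is `0`. -/
def maxOver {ι : Type*} (S : Finset ι) (g : ι → ℝ) : ℝ :=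
  if h : S.Nonempty then S.sup' h g else 0

/-- The SL rejection set `𝓡_q = {i : p_i ≤ τ_q}`. -/
def rejSet (m : ℕ) (q : ℝ) (p : Fin m → ℝ) : Finset (Fin m) :=
  Finset.univ.filter fun i => p i ≤ slThreshold m q p

/-!
Given the `p`-values, the hypotheses are independent and `H_i = 0` has conditional probability
`lfdr(p_i)` (Bayes' formula, `f · lfdr = π0`). Since `𝓡` is a function of the `p`-values,
`V / R = ∑_{i ∈ 𝓡} 1{H_i = 0} / |𝓡|` has expectation `E[∑_{i ∈ 𝓡} lfdr(p_i) / |𝓡|]`, the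
expected average of `lfdr` over `𝓡`, which is at most its maximum.
-/

lemma measurable_ite_eq_false {α : Type*} [MeasurableSpace α] {b : α → Bool}
    (hb : Measurable b) : Measurable fun a => if b a = false then (1:ℝ) else 0 :=
  (Measurable.of_discrete (f := fun c : Bool => if c = false then (1:ℝ) else 0)).comp hb

lemma measurable_of_countable_cases {α β γ : Type*} [MeasurableSpace α] [MeasurableSpace γ]
    [Countable β] {R : α → β} (hR : ∀ b, MeasurableSet {a | R a = b}) {g : β → α → γ}
    (hg : ∀ b, Measurable (g b)) : Measurable fun a => g (R a) a := by
  let : MeasurableSpace β := ⊤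
  exact (measurable_from_prod_countable_left (f := fun q : α × β => g q.2 q.1) hg).comp
    (measurable_id.prodMk (measurable_to_countable' hR))

lemma measurable_insertNth {n : ℕ} (i : Fin (n + 1)) (q : Fin n → ℝ) :
    Measurable fun t : ℝ => i.insertNth (α := fun _ => ℝ) t q := by
  refine measurable_pi_lambda _ fun j => ?_
  induction j using i.succAboveCases
  · simpa using measurable_id'
  · simp

lemma integral_pi_eq_integral_integral_insertNth {α : Type*} [MeasurableSpace α] {n : ℕ}
    (μ : Measure α) [SigmaFinite μ] (i : Fin (n + 1)) {F : (Fin (n + 1) → α) → ℝ}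
    (hF : Integrable F (.pi fun _ => μ)) :
    ∫ x, F x ∂.pi (fun _ => μ) = ∫ r, ∫ y, F (i.insertNth y r) ∂μ ∂.pi (fun _ => μ) := by
  have hmp := (measurePreserving_piFinSuccAbove (fun _ => μ) i).symm
  rw [← hmp.integral_comp']
  exact integral_prod_symm _
    ((hmp.integrable_comp_emb (MeasurableEquiv.measurableEmbedding _)).2 hF)

lemma measurable_pvals (m : ℕ) : Measurable (pvals m) :=
  measurable_pi_lambda _ fun i => (measurable_pi_apply i).snd

lemma pvals_insertNth {n : ℕ} (i : Fin (n + 1)) (y : Bool × ℝ) (r : Fin n → Bool × ℝ) :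
    pvals (n + 1) (i.insertNth y r) = i.insertNth y.2 (pvals n r) := by
  funext j
  induction j using i.succAboveCases <;> simp [pvals]

section LocalFdr

variable {π0 : ℝ} {f1 : ℝ → ℝ} {t : ℝ}

lemma le_mixDensity (hπ1 : π0 ≤ 1) (hf1 : 0 ≤ f1 t) : π0 ≤ mixDensity π0 f1 t := by
  unfold mixDensity
  nlinarith

lemma lfdr_nonneg (hπ0 : 0 ≤ π0) (hπ1 : π0 ≤ 1) (hf1 : 0 ≤ f1 t) : 0 ≤ lfdr π0 f1 t :=
  div_nonneg hπ0 (hπ0.trans (le_mixDensity hπ1 hf1))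

lemma lfdr_le_one (hπ0 : 0 ≤ π0) (hπ1 : π0 ≤ 1) (hf1 : 0 ≤ f1 t) : lfdr π0 f1 t ≤ 1 :=
  div_le_one_of_le₀ (le_mixDensity hπ1 hf1) (hπ0.trans (le_mixDensity hπ1 hf1))

lemma abs_lfdr_le_one (hπ0 : 0 ≤ π0) (hπ1 : π0 ≤ 1) (hf1 : 0 ≤ f1 t) : |lfdr π0 f1 t| ≤ 1 :=
  abs_le.2 ⟨by linarith [lfdr_nonneg hπ0 hπ1 hf1], lfdr_le_one hπ0 hπ1 hf1⟩

lemma mixDensity_mul_lfdr (hπ0 : 0 ≤ π0) (hπ1 : π0 ≤ 1) (hf1 : 0 ≤ f1 t) :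
    mixDensity π0 f1 t * lfdr π0 f1 t = π0 := by
  rcases (hπ0.trans (le_mixDensity hπ1 hf1)).eq_or_lt with h | h
  · have : π0 = 0 := le_antisymm (h ▸ le_mixDensity hπ1 hf1) hπ0
    simp [lfdr, this]
  · exact mul_div_cancel₀ _ h.ne'

lemma measurable_lfdr (hf1m : Measurable f1) : Measurable (lfdr π0 f1) :=
  measurable_const.div (measurable_const.add (measurable_const.mul hf1m))

end LocalFdr

section TwoGroups

variable {π0 : ℝ} {f1 : ℝ → ℝ}

instance : IsProbabilityMeasure uniform01 :=
  ⟨by simp [uniform01, Real.volume_Icc]⟩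

lemma integrable_of_integral_Icc_eq_one (hf1int : ∫ t in Set.Icc (0:ℝ) 1, f1 t = 1) :
    Integrable f1 uniform01 := by
  by_contra h
  have hone : ∫ t, f1 t ∂uniform01 = 1 := hf1int
  rw [integral_undef h] at hone
  norm_num at hone

lemma isProbabilityMeasure_altMeasure (hf1nn : ∀ t, 0 ≤ f1 t)
    (hf1int : ∫ t in Set.Icc (0:ℝ) 1, f1 t = 1) : IsProbabilityMeasure (altMeasure f1) := by
  constructor
  rw [altMeasure, withDensity_apply _ MeasurableSet.univ, Measure.restrict_univ,
    ← ofReal_integral_eq_lintegral_ofReal (integrable_of_integral_Icc_eq_one hf1int)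
      (ae_of_all _ hf1nn)]
  exact congrArg ENNReal.ofReal hf1int |>.trans ENNReal.ofReal_one

lemma isProbabilityMeasure_pairMeasure (hπ0 : 0 ≤ π0) (hπ1 : π0 ≤ 1) (hf1nn : ∀ t, 0 ≤ f1 t)
    (hf1int : ∫ t in Set.Icc (0:ℝ) 1, f1 t = 1) : IsProbabilityMeasure (pairMeasure π0 f1) := by
  have := isProbabilityMeasure_altMeasure hf1nn hf1int
  constructor
  simp only [pairMeasure, Measure.add_apply, Measure.smul_apply, smul_eq_mul, measure_univ,
    mul_one, ← ENNReal.ofReal_add hπ0 (sub_nonneg.2 hπ1), add_sub_cancel, ENNReal.ofReal_one]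

lemma isProbabilityMeasure_jointMeasure (m : ℕ) (hπ0 : 0 ≤ π0) (hπ1 : π0 ≤ 1)
    (hf1nn : ∀ t, 0 ≤ f1 t) (hf1int : ∫ t in Set.Icc (0:ℝ) 1, f1 t = 1) :
    IsProbabilityMeasure (jointMeasure m π0 f1) := by
  have := isProbabilityMeasure_pairMeasure hπ0 hπ1 hf1nn hf1int
  rw [jointMeasure]
  infer_instance

lemma integral_altMeasure (hf1m : Measurable f1) (hf1nn : ∀ t, 0 ≤ f1 t) (g : ℝ → ℝ) :
    ∫ t, g t ∂altMeasure f1 = ∫ t, f1 t * g t ∂uniform01 := by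
  rw [altMeasure, integral_withDensity_eq_integral_toReal_smul hf1m.ennreal_ofReal
    (ae_of_all _ fun _ => ENNReal.ofReal_lt_top)]
  simp only [ENNReal.toReal_ofReal (hf1nn _), smul_eq_mul]

lemma integral_pairMeasure (hπ0 : 0 ≤ π0) (hπ1 : π0 ≤ 1) (hf1m : Measurable f1)
    (hf1nn : ∀ t, 0 ≤ f1 t) (hf1int : ∫ t in Set.Icc (0:ℝ) 1, f1 t = 1)
    {g : Bool × ℝ → ℝ} (hg : Measurable g) {C : ℝ} (hgC : ∀ y, |g y| ≤ C) :
    ∫ y, g y ∂pairMeasure π0 f1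
      = ∫ t, (π0 * g (false, t) + (1 - π0) * (f1 t * g (true, t))) ∂uniform01 := by
  have := isProbabilityMeasure_altMeasure hf1nn hf1int
  have hbound {μ : Measure (Bool × ℝ)} [IsFiniteMeasure μ] : Integrable g μ :=
    .of_bound hg.aestronglyMeasurable C (ae_of_all _ hgC)
  have hnull : Integrable (fun t => g (false, t)) uniform01 :=
    .of_bound (hg.comp measurable_prodMk_left).aestronglyMeasurable C (ae_of_all _ fun _ => hgC _)
  have halt : Integrable (fun t => f1 t * g (true, t)) uniform01 := by
    refine ((integrable_of_integral_Icc_eq_one hf1int).mul_const C).mono'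
      (hf1m.mul (hg.comp measurable_prodMk_left)).aestronglyMeasurable (ae_of_all _ fun t => ?_)
    rw [norm_mul, Real.norm_eq_abs, Real.norm_eq_abs, abs_of_nonneg (hf1nn t)]
    exact mul_le_mul_of_nonneg_left (hgC _) (hf1nn t)
  rw [pairMeasure, integral_add_measure (hbound.smul_measure ENNReal.ofReal_ne_top)
      (hbound.smul_measure ENNReal.ofReal_ne_top), integral_smul_measure, integral_smul_measure,
    Measure.dirac_prod, Measure.dirac_prod,
    integral_map measurable_prodMk_left.aemeasurable hg.aestronglyMeasurable,
    integral_map measurable_prodMk_left.aemeasurable hg.aestronglyMeasurable,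
    integral_altMeasure hf1m hf1nn, ENNReal.toReal_ofReal hπ0,
    ENNReal.toReal_ofReal (sub_nonneg.2 hπ1), integral_add (hnull.const_mul _) (halt.const_mul _),
    integral_const_mul, integral_const_mul, smul_eq_mul, smul_eq_mul]

end TwoGroups

section NullIndicator

variable {π0 : ℝ} {f1 : ℝ → ℝ}

theorem integral_pairMeasure_null_mul_eq_lfdr_mul (hπ0 : 0 ≤ π0) (hπ1 : π0 ≤ 1)
    (hf1m : Measurable f1) (hf1nn : ∀ t, 0 ≤ f1 t) (hf1int : ∫ t in Set.Icc (0:ℝ) 1, f1 t = 1)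
    {φ : ℝ → ℝ} (hφ : Measurable φ) {C : ℝ} (hφC : ∀ t, |φ t| ≤ C) :
    ∫ y, (if y.1 = false then (1:ℝ) else 0) * φ y.2 ∂pairMeasure π0 f1
      = ∫ y, lfdr π0 f1 y.2 * φ y.2 ∂pairMeasure π0 f1 := by
  have hC : 0 ≤ C := (abs_nonneg _).trans (hφC 0)
  rw [integral_pairMeasure hπ0 hπ1 hf1m hf1nn hf1int
      (g := fun y => (if y.1 = false then (1:ℝ) else 0) * φ y.2)
      ((measurable_ite_eq_false measurable_fst).mul (hφ.comp measurable_snd)) (C := C)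
      fun y => by split <;> simp [hφC, hC],
    integral_pairMeasure hπ0 hπ1 hf1m hf1nn hf1int (g := fun y => lfdr π0 f1 y.2 * φ y.2)
      (((measurable_lfdr hf1m).comp measurable_snd).mul (hφ.comp measurable_snd)) (C := C)
      fun y => by
        rw [abs_mul]
        exact mul_le_of_le_one_left (abs_nonneg _) (abs_lfdr_le_one hπ0 hπ1 (hf1nn _))
          |>.trans (hφC _)]
  refine integral_congr_ae (ae_of_all _ fun t => ?_)
  have hmix := mixDensity_mul_lfdr hπ0 hπ1 (hf1nn t)
  simp only [mixDensity] at hmix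
  simp only [Bool.true_eq_false, ↓reduceIte, one_mul, zero_mul, mul_zero, add_zero]
  linear_combination (-φ t) * hmix

variable {m : ℕ} {μ : Measure (Fin m → Bool × ℝ)} [IsFiniteMeasure μ]
  {g : (Fin m → ℝ) → ℝ} {C : ℝ}

lemma integrable_null_mul_pvals (i : Fin m) (hg : Measurable g) (hgC : ∀ p, |g p| ≤ C) :
    Integrable (fun x => (if (x i).1 = false then (1:ℝ) else 0) * g (pvals m x)) μ :=
  (Integrable.of_bound (hg.comp (measurable_pvals m)).aestronglyMeasurable C
    (ae_of_all _ fun _ => hgC _)).bdd_mul (c := 1)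
    (measurable_ite_eq_false (measurable_pi_apply i).fst).aestronglyMeasurable
    (ae_of_all _ fun _ => by split <;> simp)

lemma integrable_lfdr_mul_pvals (hπ0 : 0 ≤ π0) (hπ1 : π0 ≤ 1) (hf1m : Measurable f1)
    (hf1nn : ∀ t, 0 ≤ f1 t) (i : Fin m) (hg : Measurable g) (hgC : ∀ p, |g p| ≤ C) :
    Integrable (fun x => lfdr π0 f1 (x i).2 * g (pvals m x)) μ :=
  (Integrable.of_bound (hg.comp (measurable_pvals m)).aestronglyMeasurable C
    (ae_of_all _ fun _ => hgC _)).bdd_mul (c := 1)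
    ((measurable_lfdr hf1m).comp (measurable_pi_apply i).snd).aestronglyMeasurable
    (ae_of_all _ fun _ => abs_lfdr_le_one hπ0 hπ1 (hf1nn _))

theorem integral_jointMeasure_null_mul_eq_lfdr_mul (hπ0 : 0 ≤ π0) (hπ1 : π0 ≤ 1)
    (hf1m : Measurable f1) (hf1nn : ∀ t, 0 ≤ f1 t) (hf1int : ∫ t in Set.Icc (0:ℝ) 1, f1 t = 1)
    (i : Fin m) (hg : Measurable g) (hgC : ∀ p, |g p| ≤ C) :
    ∫ x, (if (x i).1 = false then (1:ℝ) else 0) * g (pvals m x) ∂jointMeasure m π0 f1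
      = ∫ x, lfdr π0 f1 (x i).2 * g (pvals m x) ∂jointMeasure m π0 f1 := by
  obtain ⟨n, rfl⟩ : ∃ n, m = n + 1 := ⟨m - 1, by have := i.pos; omega⟩
  have := isProbabilityMeasure_pairMeasure hπ0 hπ1 hf1nn hf1int
  rw [jointMeasure,
    integral_pi_eq_integral_integral_insertNth _ i (integrable_null_mul_pvals i hg hgC),
    integral_pi_eq_integral_integral_insertNth _ i
      (integrable_lfdr_mul_pvals hπ0 hπ1 hf1m hf1nn i hg hgC)]
  refine integral_congr_ae (ae_of_all _ fun r => ?_)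
  simp only [Fin.insertNth_apply_same, pvals_insertNth]
  exact integral_pairMeasure_null_mul_eq_lfdr_mul hπ0 hπ1 hf1m hf1nn hf1int
    (hg.comp (measurable_insertNth i _)) fun _ => hgC _

theorem integral_jointMeasure_sum_null_mul_eq_lfdr_mul (hπ0 : 0 ≤ π0) (hπ1 : π0 ≤ 1)
    (hf1m : Measurable f1) (hf1nn : ∀ t, 0 ≤ f1 t) (hf1int : ∫ t in Set.Icc (0:ℝ) 1, f1 t = 1)
    {w : Fin m → (Fin m → ℝ) → ℝ} (hw : ∀ i, Measurable (w i)) (hwC : ∀ i p, |w i p| ≤ C) :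
    ∫ x, ∑ i, (if (x i).1 = false then (1:ℝ) else 0) * w i (pvals m x) ∂jointMeasure m π0 f1
      = ∫ x, ∑ i, lfdr π0 f1 (x i).2 * w i (pvals m x) ∂jointMeasure m π0 f1 := by
  have := isProbabilityMeasure_jointMeasure m hπ0 hπ1 hf1nn hf1int
  rw [integral_finsetSum _ fun i _ => integrable_null_mul_pvals i (hw i) (hwC i),
    integral_finsetSum _ fun i _ => integrable_lfdr_mul_pvals hπ0 hπ1 hf1m hf1nn i (hw i) (hwC i)]
  exact Finset.sum_congr rfl fun i _ =>
    integral_jointMeasure_null_mul_eq_lfdr_mul hπ0 hπ1 hf1m hf1nn hf1int i (hw i) (hwC i)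

end NullIndicator

section MaxOver

variable {ι : Type*} {S : Finset ι} {g : ι → ℝ}

lemma abs_maxOver_le {C : ℝ} (hC : 0 ≤ C) (h : ∀ i ∈ S, |g i| ≤ C) : |maxOver S g| ≤ C := by
  unfold maxOver
  split_ifs with hS
  · obtain ⟨i, hi, hmax⟩ := Finset.exists_mem_eq_sup' hS g
    exact hmax ▸ h i hi
  · simpa using hC

lemma measurable_maxOver {α : Type*} [MeasurableSpace α] (S : Finset ι) {g : ι → α → ℝ}
    (hg : ∀ i ∈ S, Measurable (g i)) : Measurable fun a => maxOver S (g · a) := by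
  unfold maxOver
  split_ifs with hS
  · convert Finset.measurable_sup' hS hg using 1
    exact funext fun a => (Finset.sup'_apply hS g a).symm
  · exact measurable_const

end MaxOver

section UniformWeight

variable {ι : Type*} [DecidableEq ι]

def uniformWeight (S : Finset ι) (i : ι) : ℝ := if i ∈ S then (S.card : ℝ)⁻¹ else 0

lemma abs_uniformWeight_le_one (S : Finset ι) (i : ι) : |uniformWeight S i| ≤ 1 := by
  unfold uniformWeight
  split_ifs with hi
  · rw [abs_inv, Nat.abs_cast]
    exact inv_le_one_of_one_le₀ (by exact_mod_cast Finset.card_pos.2 ⟨i, hi⟩)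
  · simp

variable [Fintype ι]

lemma sum_mul_uniformWeight (S : Finset ι) (a : ι → ℝ) :
    ∑ i, a i * uniformWeight S i = (∑ i ∈ S, a i) / S.card := by
  simp [uniformWeight, mul_ite, Finset.sum_ite_mem, div_eq_mul_inv, Finset.sum_mul]

lemma ite_nonempty_card_filter_div_eq_sum (S : Finset ι) (P : ι → Prop) [DecidablePred P] :
    (if S.Nonempty then ((S.filter P).card : ℝ) / S.card else 0)
      = ∑ i, (if P i then (1:ℝ) else 0) * uniformWeight S i := by
  rw [sum_mul_uniformWeight, ← Finset.sum_boole]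
  split_ifs with hS
  · rfl
  · simp [Finset.not_nonempty_iff_eq_empty.1 hS]

lemma sum_mul_uniformWeight_le_maxOver (S : Finset ι) (g : ι → ℝ) :
    ∑ i, g i * uniformWeight S i ≤ maxOver S g := by
  rw [sum_mul_uniformWeight, maxOver]
  split_ifs with hS
  · rw [div_le_iff₀ (by exact_mod_cast hS.card_pos), ← nsmul_eq_mul']
    exact Finset.sum_le_card_nsmul S g _ fun i hi => Finset.le_sup' g hi
  · simp [Finset.not_nonempty_iff_eq_empty.1 hS]

end UniformWeight

theorem stmt7_general (m : ℕ) (π0 : ℝ) (hπ0 : 0 ≤ π0) (hπ1 : π0 ≤ 1)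
    (f1 : ℝ → ℝ) (hf1m : Measurable f1) (hf1nn : ∀ t, 0 ≤ f1 t)
    (hf1int : ∫ t in Set.Icc (0:ℝ) 1, f1 t = 1)
    (𝓡 : (Fin m → ℝ) → Finset (Fin m))
    (h𝓡meas : ∀ S : Finset (Fin m), MeasurableSet {p | 𝓡 p = S}) :
    ∫ x, (if (𝓡 (pvals m x)).Nonempty
          then (((𝓡 (pvals m x)).filter fun i => (x i).1 = false).card : ℝ)
              / ((𝓡 (pvals m x)).card : ℝ)
          else 0) ∂ jointMeasure m π0 f1
      ≤ ∫ x, maxOver (𝓡 (pvals m x)) (fun i => lfdr π0 f1 (pvals m x i))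
          ∂ jointMeasure m π0 f1 := by
  have := isProbabilityMeasure_jointMeasure m hπ0 hπ1 hf1nn hf1int
  have hw (i : Fin m) : Measurable fun p => uniformWeight (𝓡 p) i :=
    measurable_of_countable_cases (g := fun S _ => uniformWeight S i) h𝓡meas
      fun _ => measurable_const
  have hlfdr (i : Fin m) : Measurable fun x : Fin m → Bool × ℝ => lfdr π0 f1 (x i).2 :=
    (measurable_lfdr hf1m).comp (measurable_pi_apply i).snd
  have hmax : Integrable (fun x => maxOver (𝓡 (pvals m x)) (fun i => lfdr π0 f1 (pvals m x i)))
      (jointMeasure m π0 f1) :=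
    .of_bound (measurable_of_countable_cases (R := fun x => 𝓡 (pvals m x))
      (fun S => measurable_pvals m (h𝓡meas S))
      fun S => measurable_maxOver S fun i _ => hlfdr i).aestronglyMeasurable 1
      (ae_of_all _ fun _ => abs_maxOver_le zero_le_one fun _ _ => abs_lfdr_le_one hπ0 hπ1 (hf1nn _))
  calc _ = ∫ x, ∑ i, (if (x i).1 = false then (1:ℝ) else 0) * uniformWeight (𝓡 (pvals m x)) i
          ∂jointMeasure m π0 f1 := by
        simp only [ite_nonempty_card_filter_div_eq_sum]
    _ = ∫ x, ∑ i, lfdr π0 f1 (x i).2 * uniformWeight (𝓡 (pvals m x)) i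
          ∂jointMeasure m π0 f1 :=
        integral_jointMeasure_sum_null_mul_eq_lfdr_mul hπ0 hπ1 hf1m hf1nn hf1int hw
          fun _ _ => abs_uniformWeight_le_one _ _
    _ ≤ _ := integral_mono (integrable_finsetSum _ fun i _ => integrable_lfdr_mul_pvals hπ0 hπ1
          hf1m hf1nn i (hw i) fun _ => abs_uniformWeight_le_one _ _) hmax
          fun x => sum_mul_uniformWeight_le_maxOver _ _

/-- Under the two-groups model, for any measurable multiple-testing
procedure `𝓡 = 𝓡(p_1, …, p_m) ⊆ {1, …, m}`, with `V = #{i ∈ 𝓡 : H_i = 0}` and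
`R = |𝓡|`, we have `FDR(𝓡) := E[(V/R)·1{R > 0}] ≤ max-lfdr(𝓡) := E[max_{i ∈ 𝓡} lfdr(p_i)]`,
where the maximum over an empty rejection set is `0`. -/
theorem stmt7 (m : ℕ) (hm : 0 < m) (π0 : ℝ) (hπ0 : 0 ≤ π0) (hπ1 : π0 ≤ 1)
    (f1 : ℝ → ℝ) (hf1m : Measurable f1) (hf1nn : ∀ t, 0 ≤ f1 t)
    (hf1int : ∫ t in Set.Icc (0:ℝ) 1, f1 t = 1)
    (𝓡 : (Fin m → ℝ) → Finset (Fin m))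
    (h𝓡meas : ∀ S : Finset (Fin m), MeasurableSet {p | 𝓡 p = S}) :
    ∫ x, (if (𝓡 (pvals m x)).Nonempty
          then (((𝓡 (pvals m x)).filter fun i => (x i).1 = false).card : ℝ)
              / ((𝓡 (pvals m x)).card : ℝ)
          else 0) ∂ jointMeasure m π0 f1
      ≤ ∫ x, maxOver (𝓡 (pvals m x)) (fun i => lfdr π0 f1 (pvals m x i))
          ∂ jointMeasure m π0 f1 :=
  stmt7_general m π0 hπ0 hπ1 f1 hf1m hf1nn hf1int 𝓡 h𝓡meas
end
end

section
/- Let p_1,…,p_m ∈ [0,1] with empirical cdf F_m(t) = (1/m)·#{i : p_i ≤ t}, and let τ_q = p_(R_q) be the SL threshold at level q > 0. Let F : [0,1] → ℝ be any function, and let t_0 ∈ [0,1], δ > 0, η > 0 satisfy F(t) − F(t_0) − (t − t_0)/q ≤ −η for all t ∈ [t_0 + δ, 1]. If τ_q ≥ t_0 + δ, then sup_{t ∈ [0,1]} |F_m(t) − F(t)| ≥ η/2. -/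
open MeasureTheory ProbabilityTheory Filter

noncomputable section

/-
The threshold `τ_q` maximizes `t ↦ q F_m(t) - t` on `[0, ∞)`: for `k = m F_m(t)` one has
`p_(k) ≤ t`, and `R_q ≤ m F_m(τ_q)`, so minimality of `R_q` gives
`q F_m(t) - t ≤ q k/m - p_(k) ≤ q R_q/m - τ_q ≤ q F_m(τ_q) - τ_q`.
Hence `(τ_q - t_0)/q ≤ F_m(τ_q) - F_m(t_0)`, and together with the hypothesis on `F` at `τ_q`
the function `F_m - F` increases by at least `η` from `t_0` to `τ_q`; so it has absolute value
at least `η/2` at one of the two points.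
-/

open Finset

lemma orderStat_of_one_le_of_le {m k : ℕ} (p : Fin m → ℝ) (hk : 1 ≤ k) (hkm : k ≤ m) :
    orderStat m p k = p (Tuple.sort p ⟨k - 1, by omega⟩) :=
  dif_pos ⟨hk, hkm⟩

lemma orderStat_zero (m : ℕ) (p : Fin m → ℝ) : orderStat m p 0 = 0 := rfl

lemma orderStat_mem_Icc {m : ℕ} {p : Fin m → ℝ} (hp : ∀ i, p i ∈ Set.Icc (0:ℝ) 1) (k : ℕ) :
    orderStat m p k ∈ Set.Icc (0:ℝ) 1 := by
  unfold orderStat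
  split
  · exact hp _
  · exact ⟨le_rfl, zero_le_one⟩

lemma card_filter_apply_sort_le {α : Type*} [LinearOrder α] {m : ℕ} (p : Fin m → α) (a : α) :
    #{i | p (Tuple.sort p i) ≤ a} = #{i | p i ≤ a} :=
  card_equiv (Tuple.sort p) (by simp)

lemma orderStat_le_iff_le_card {m k : ℕ} (p : Fin m → ℝ) (hk : 1 ≤ k) (hkm : k ≤ m) (a : ℝ) :
    orderStat m p k ≤ a ↔ k ≤ #{i | p i ≤ a} := by
  rw [orderStat_of_one_le_of_le p hk hkm, ← card_filter_apply_sort_le]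
  refine (Tuple.lt_card_le_iff_apply_le_of_monotone (Tuple.monotone_sort p)).symm.trans ?_
  simp only [Function.comp_apply]
  omega

lemma orderStat_card_filter_le {m : ℕ} (p : Fin m → ℝ) {t : ℝ} (ht : 0 ≤ t) :
    orderStat m p #{i | p i ≤ t} ≤ t := by
  rcases Nat.eq_zero_or_pos #{i | p i ≤ t} with h | h
  · rwa [h, orderStat_zero]
  · exact (orderStat_le_iff_le_card p h ((card_le_univ _).trans_eq (Fintype.card_fin m)) t).2 le_rfl

lemma le_card_filter_le_orderStat {m k : ℕ} (p : Fin m → ℝ) (hkm : k ≤ m) :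
    k ≤ #{i | p i ≤ orderStat m p k} := by
  rcases Nat.eq_zero_or_pos k with rfl | hk
  · exact Nat.zero_le _
  · exact (orderStat_le_iff_le_card p hk hkm _).1 le_rfl

lemma slCount_le_and_isMin (m : ℕ) (q : ℝ) (p : Fin m → ℝ) :
    slCount m q p ≤ m ∧ ∀ j ≤ m,
      orderStat m p (slCount m q p) - q * slCount m q p / m ≤ orderStat m p j - q * j / m := by
  obtain ⟨k, hk, hmin⟩ := exists_min_image (range (m + 1))
    (fun k => orderStat m p k - q * k / m) ⟨0, by simp⟩
  refine Nat.sSup_mem (s := {k | k ≤ m ∧ ∀ j ≤ m,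
    orderStat m p k - q * k / m ≤ orderStat m p j - q * j / m})
    ⟨k, ?_, fun j hj => hmin j ?_⟩ ⟨m, fun k hk => hk.1⟩
  · exact Nat.lt_succ_iff.1 (mem_range.1 hk)
  · exact mem_range.2 (Nat.lt_succ_of_le hj)

theorem isMaxOn_slThreshold {m : ℕ} (p : Fin m → ℝ) {q : ℝ} (hq : 0 ≤ q) :
    IsMaxOn (fun t => q * ecdf m p t - t) (Set.Ici 0) (slThreshold m q p) := by
  intro t (ht : 0 ≤ t)
  obtain ⟨hRm, hmin⟩ := slCount_le_and_isMin m q p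
  set R := slCount m q p
  set k := #{i | p i ≤ t}
  have hτ : slThreshold m q p = orderStat m p R := rfl
  have hkm : k ≤ m := (card_le_univ _).trans_eq (Fintype.card_fin m)
  have hR : (R : ℝ) / m ≤ ecdf m p (slThreshold m q p) := by
    unfold ecdf
    gcongr
    exact le_card_filter_le_orderStat p hRm
  calc q * ecdf m p t - t
      ≤ q * k / m - orderStat m p k := by
        rw [ecdf, mul_div_assoc]
        linarith [orderStat_card_filter_le p ht]
    _ ≤ q * R / m - slThreshold m q p := by linarith [hmin k hkm]
    _ ≤ q * ecdf m p (slThreshold m q p) - slThreshold m q p := by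
        rw [mul_div_assoc]
        gcongr

lemma half_le_abs_or_half_le_abs_of_le_sub {α : Type*} [Field α] [LinearOrder α]
    [IsStrictOrderedRing α] {η x y : α} (h : η ≤ x - y) :
    η / 2 ≤ |x| ∨ η / 2 ≤ |y| := by
  by_contra! hlt
  linarith [le_abs_self x, neg_abs_le y]

theorem stmt16_general (m : ℕ) (p : Fin m → ℝ) (hp : ∀ i, p i ∈ Set.Icc (0:ℝ) 1)
    (q : ℝ) (hq : 0 < q) (F : ℝ → ℝ) (t0 δ η : ℝ)
    (ht0 : t0 ∈ Set.Icc (0:ℝ) 1)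
    (hF : ∀ t ∈ Set.Icc (t0 + δ) 1, F t - F t0 - (t - t0) / q ≤ -η)
    (hτ : t0 + δ ≤ slThreshold m q p) :
    ∃ t ∈ Set.Icc (0:ℝ) 1, η / 2 ≤ |ecdf m p t - F t| := by
  set τ := slThreshold m q p
  have hτ01 : τ ∈ Set.Icc (0:ℝ) 1 := orderStat_mem_Icc hp _
  have hFτ := hF τ ⟨hτ, hτ01.2⟩
  have hecdf : (τ - t0) / q ≤ ecdf m p τ - ecdf m p t0 := by
    have hmax : q * ecdf m p t0 - t0 ≤ q * ecdf m p τ - τ :=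
      isMaxOn_slThreshold p hq.le (Set.mem_Ici.2 ht0.1)
    rw [div_le_iff₀ hq]
    linarith
  rcases half_le_abs_or_half_le_abs_of_le_sub
      (show η ≤ (ecdf m p τ - F τ) - (ecdf m p t0 - F t0) by linarith) with h | h
  · exact ⟨τ, hτ01, h⟩
  · exact ⟨t0, ht0, h⟩

/-- Let `p_1, …, p_m ∈ [0,1]` with empirical cdf `F_m`, and let
`τ_q` be the SL threshold at level `q > 0`. Let `F` be any function, and let
`t_0 ∈ [0,1]`, `δ > 0`, `η > 0` satisfy `F(t) - F(t_0) - (t - t_0)/q ≤ -η` for all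
`t ∈ [t_0 + δ, 1]`. If `τ_q ≥ t_0 + δ`, then `sup_{t ∈ [0,1]} |F_m(t) - F(t)| ≥ η/2`
(witnessed by some `t ∈ [0,1]`). -/
theorem stmt16 (m : ℕ) (hm : 0 < m) (p : Fin m → ℝ) (hp : ∀ i, p i ∈ Set.Icc (0:ℝ) 1)
    (q : ℝ) (hq : 0 < q) (F : ℝ → ℝ) (t0 δ η : ℝ)
    (ht0 : t0 ∈ Set.Icc (0:ℝ) 1) (hδ : 0 < δ) (hη : 0 < η)
    (hF : ∀ t ∈ Set.Icc (t0 + δ) 1, F t - F t0 - (t - t0) / q ≤ -η)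
    (hτ : t0 + δ ≤ slThreshold m q p) :
    ∃ t ∈ Set.Icc (0:ℝ) 1, η / 2 ≤ |ecdf m p t - F t| :=
  stmt16_general m p hp q hq F t0 δ η ht0 hF hτ
end
end
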